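/- arXiv:2505.07810 — 2 statements merged into one kernel-verified Lean document; each statement's English description precedes it below -/
import Mathlib

section
/- Let a, b, c, d, e, f, g, h be integers such that e, e+f, e+g and e+f+g+h are nonzero and all have the same sign, and suppose ⌊a/e⌋ = ⌊(a+b)/(e+f)⌋ = ⌊(a+c)/(e+g)⌋ = ⌊(a+b+c+d)/(e+f+g+h)⌋ = c₀ for some integer c₀. Then for all real numbers x, y with x ≥ 1 and y ≥ 1, one has ⌊(axy+bx+cy+d)/(exy+fx+gy+h)⌋ = c₀. -/
/-!
Substituting `x = 1 + s`, `y = 1 + t` writes numerator and denominator of the bilinear fractional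
transformation as `a st + (a+b) s + (a+c) t + (a+b+c+d)` and `e st + (e+f) s + (e+g) t + (e+f+g+h)`,
so its value is a weighted mediant of the four corner fractions with weights `st, s, t, 1 ≥ 0`.
A weighted mediant of fractions whose denominators share a sign lies between the smallest and
the largest of them, so it stays in `[c₀, c₀ + 1)`.
-/

open Finset

section Mediant

variable {K ι : Type*} [Field K] [LinearOrder K] [IsStrictOrderedRing K] [FloorRing K]
  {s : Finset ι} {w n d : ι → K} {k : ℤ}

theorem floor_sum_mul_div_sum_mul_of_pos (hw : ∀ i ∈ s, 0 ≤ w i) (hw₀ : ∃ i ∈ s, 0 < w i)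
    (hd : ∀ i ∈ s, 0 < d i) (hk : ∀ i ∈ s, ⌊n i / d i⌋ = k) :
    ⌊(∑ i ∈ s, w i * n i) / ∑ i ∈ s, w i * d i⌋ = k := by
  obtain ⟨j, hj, hwj⟩ := hw₀
  have hbounds (i) (hi : i ∈ s) : k * d i ≤ n i ∧ n i < (k + 1) * d i := by
    have := Int.floor_eq_iff.1 (hk i hi)
    rwa [le_div_iff₀ (hd i hi), div_lt_iff₀ (hd i hi)] at this
  have hD : 0 < ∑ i ∈ s, w i * d i :=
    sum_pos' (fun i hi => mul_nonneg (hw i hi) (hd i hi).le) ⟨j, hj, mul_pos hwj (hd j hj)⟩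
  rw [Int.floor_eq_iff, le_div_iff₀ hD, div_lt_iff₀ hD, mul_sum, mul_sum]
  constructor
  · refine sum_le_sum fun i hi => ?_
    rw [mul_left_comm]
    exact mul_le_mul_of_nonneg_left (hbounds i hi).1 (hw i hi)
  · refine sum_lt_sum (fun i hi => ?_) ⟨j, hj, ?_⟩
    · rw [mul_left_comm]
      exact mul_le_mul_of_nonneg_left (hbounds i hi).2.le (hw i hi)
    · rw [mul_left_comm]
      exact mul_lt_mul_of_pos_left (hbounds j hj).2 hwj

theorem floor_sum_mul_div_sum_mul (hw : ∀ i ∈ s, 0 ≤ w i) (hw₀ : ∃ i ∈ s, 0 < w i)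
    (hd : (∀ i ∈ s, 0 < d i) ∨ ∀ i ∈ s, d i < 0) (hk : ∀ i ∈ s, ⌊n i / d i⌋ = k) :
    ⌊(∑ i ∈ s, w i * n i) / ∑ i ∈ s, w i * d i⌋ = k := by
  rcases hd with hd | hd
  · exact floor_sum_mul_div_sum_mul_of_pos hw hw₀ hd hk
  · have := floor_sum_mul_div_sum_mul_of_pos (n := fun i => -n i) (d := fun i => -d i) hw hw₀
      (fun i hi => neg_pos.2 (hd i hi)) (fun i hi => by rw [neg_div_neg_eq]; exact hk i hi)
    simpa only [mul_neg, sum_neg_distrib, neg_div_neg_eq] using this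

end Mediant

theorem bilinear_eq_sum_corners {K : Type*} [CommRing K] (a b c d x y : K) :
    a * x * y + b * x + c * y + d = ∑ i : Fin 4,
      ![(x - 1) * (y - 1), x - 1, y - 1, 1] i * ![a, a + b, a + c, a + b + c + d] i := by
  simp only [Fin.sum_univ_four, Matrix.cons_val]
  ring

/-- If `e`, `e+f`, `e+g`, `e+f+g+h` are nonzero integers all of the same sign
and the floors `⌊a/e⌋ = ⌊(a+b)/(e+f)⌋ = ⌊(a+c)/(e+g)⌋ = ⌊(a+b+c+d)/(e+f+g+h)⌋ = c₀` agree,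
then for all reals `x, y ≥ 1`, `⌊(a*x*y+b*x+c*y+d)/(e*x*y+f*x+g*y+h)⌋ = c₀`. -/
theorem stmt_3 (a b c d e f g h c₀ : ℤ)
    (hsign : (0 < e ∧ 0 < e + f ∧ 0 < e + g ∧ 0 < e + f + g + h) ∨
             (e < 0 ∧ e + f < 0 ∧ e + g < 0 ∧ e + f + g + h < 0))
    (h1 : ⌊(a : ℝ) / e⌋ = c₀) (h2 : ⌊((a : ℝ) + b) / ((e : ℝ) + f)⌋ = c₀)
    (h3 : ⌊((a : ℝ) + c) / ((e : ℝ) + g)⌋ = c₀)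
    (h4 : ⌊((a : ℝ) + b + c + d) / ((e : ℝ) + f + g + h)⌋ = c₀) :
    ∀ x y : ℝ, 1 ≤ x → 1 ≤ y →
      ⌊((a : ℝ) * x * y + b * x + c * y + d) / ((e : ℝ) * x * y + f * x + g * y + h)⌋ = c₀ := by
  intro x y hx hy
  rw [bilinear_eq_sum_corners, bilinear_eq_sum_corners]
  refine floor_sum_mul_div_sum_mul ?_ ⟨3, mem_univ _, by simp⟩ ?_
    (by simp [Fin.forall_fin_succ, h1, h2, h3, h4])
  · simpa [Fin.forall_fin_succ] using ⟨mul_nonneg (sub_nonneg.2 hx) (sub_nonneg.2 hy), hx, hy⟩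
  · simp only [mem_univ, forall_const, Fin.forall_fin_succ,
      Matrix.cons_val_zero, Matrix.cons_val_succ, Matrix.cons_val_fin_one, Int.cast_pos,
      Int.cast_lt_zero]
    exact_mod_cast hsign
end

section
/- Let m ≥ 1, let x⁽¹⁾, …, x⁽ᵐ⁾, y⁽¹⁾, …, y⁽ᵐ⁾ be real numbers, and for k = 1, …, m+1 let (Aₙ⁽ᵏ⁾)ₙ≥0 and (Bₙ⁽ᵏ⁾)ₙ≥0 be sequences of integers with Aₙ⁽ᵐ⁺¹⁾ > 0 and Bₙ⁽ᵐ⁺¹⁾ > 0 for all n, limₙ Aₙ⁽ᵏ⁾/Aₙ⁽ᵐ⁺¹⁾ = x⁽ᵏ⁾ and limₙ Bₙ⁽ᵏ⁾/Bₙ⁽ᵐ⁺¹⁾ = y⁽ᵏ⁾ for k ∈ {1, …, m}. Set x⁽ᵐ⁺¹⁾ = y⁽ᵐ⁺¹⁾ = 1. For i = 1, …, m+1 let c_{k,h}⁽ⁱ⁾ (1 ≤ k, h ≤ m+1) be integers, set Λ⁽ⁱ⁾ = Σ_{k,h} c_{k,h}⁽ⁱ⁾x⁽ᵏ⁾y⁽ʰ⁾,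 and assume (Λ⁽¹⁾, …, Λ⁽ᵐ⁺¹⁾) is linearly independent over ℚ. For n₁, n₂ ≥ m and 1 ≤ j, l ≤ m+1 set S_{j,l}(n₁,n₂) = Σ_{k,h} c_{k,h}⁽ᵐ⁺¹⁾A_{n₁+1−j}⁽ᵏ⁾B_{n₂+1−l}⁽ʰ⁾ and T_{i,j,l}(n₁,n₂) = Σ_{k,h} c_{k,h}⁽ⁱ⁾A_{n₁+1−j}⁽ᵏ⁾B_{n₂+1−l}⁽ʰ⁾. Then there exists N ≥ m such that for all n₁, n₂ ≥ N: the numbers S_{j,l}(n₁,n₂) (1 ≤ j, l ≤ m+1) are all nonzero and all have the same sign, and for each i ∈ {1, …, m} the floors ⌊T_{i,j,l}(n₁,n₂)/S_{j,l}(n₁,n₂)⌋ are equal for all j, l ∈ {1, …, m+1}, their common value being ⌊Λ⁽ⁱ⁾/Λ⁽ᵐ⁺¹⁾⌋. -/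
/-!
Divide each bilinear combination `∑ c k h * A p k * B q h` by the positive number
`A p (last) * B q (last)`. The normalised quantities converge, as `p, q → ∞` independently, to
`Λ i = ∑ c i k h * X k * Y h`. Linear independence over `ℚ` makes `Λ (last)` nonzero and every
ratio `Λ i / Λ (last)` irrational, so the normalised denominators eventually have the sign of
`Λ (last)` and the normalised ratios eventually lie strictly between `⌊Λ i / Λ (last)⌋` and the
next integer. The shifts `n - j` with `j ≤ m` only postpone the threshold by `m`.
-/

open Filter Topology

section BilinSum

variable {ι : Type*} [Fintype ι]

def bilinSum (d : ι → ι → ℝ) (u v : ι → ℝ) : ℝ := ∑ k, ∑ h, d k h * u k * v h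

lemma bilinSum_div_div (d : ι → ι → ℝ) (u v : ι → ℝ) (a b : ℝ) :
    bilinSum d (fun k => u k / a) (fun h => v h / b) = bilinSum d u v / (a * b) := by
  simp only [bilinSum, Finset.sum_div]
  exact Finset.sum_congr rfl fun k _ => Finset.sum_congr rfl fun h _ => by ring

lemma tendsto_bilinSum {α : Type*} {l : Filter α} {u v : α → ι → ℝ} {U V : ι → ℝ}
    (hu : ∀ k, Tendsto (fun z => u z k) l (𝓝 (U k)))
    (hv : ∀ h, Tendsto (fun z => v z h) l (𝓝 (V h))) (d : ι → ι → ℝ) :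
    Tendsto (fun z => bilinSum d (u z) (v z)) l (𝓝 (bilinSum d U V)) :=
  tendsto_finsetSum _ fun k _ => tendsto_finsetSum _ fun h _ =>
    (tendsto_const_nhds.mul (hu k)).mul (hv h)

end BilinSum

lemma tendsto_div_last_snoc {m : ℕ} {α : Type*} {l : Filter α} {a : α → Fin (m + 1) → ℝ}
    {x : Fin m → ℝ} (ha : ∀ z, a z (Fin.last m) ≠ 0)
    (hx : ∀ k : Fin m, Tendsto (fun z => a z k.castSucc / a z (Fin.last m)) l (𝓝 (x k)))
    (k : Fin (m + 1)) :
    Tendsto (fun z => a z k / a z (Fin.last m)) l (𝓝 ((Fin.snoc x 1 : Fin (m + 1) → ℝ) k)) := by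
  induction k using Fin.lastCases with
  | last => simpa [div_self (ha _)] using tendsto_const_nhds
  | cast k => simpa using hx k

lemma tendsto_bilinSum_div_mul_last {m : ℕ} {α β : Type*} {la : Filter α} {lb : Filter β}
    {a : α → Fin (m + 1) → ℝ} {b : β → Fin (m + 1) → ℝ} {x y : Fin m → ℝ}
    (ha : ∀ z, a z (Fin.last m) ≠ 0) (hb : ∀ z, b z (Fin.last m) ≠ 0)
    (hx : ∀ k : Fin m, Tendsto (fun z => a z k.castSucc / a z (Fin.last m)) la (𝓝 (x k)))
    (hy : ∀ k : Fin m, Tendsto (fun z => b z k.castSucc / b z (Fin.last m)) lb (𝓝 (y k)))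
    (d : Fin (m + 1) → Fin (m + 1) → ℝ) :
    Tendsto (fun z : α × β =>
        bilinSum d (a z.1) (b z.2) / (a z.1 (Fin.last m) * b z.2 (Fin.last m)))
      (la ×ˢ lb) (𝓝 (bilinSum d (Fin.snoc x 1) (Fin.snoc y 1))) := by
  simp only [← bilinSum_div_div]
  exact tendsto_bilinSum (fun k => (tendsto_div_last_snoc ha hx k).comp tendsto_fst)
    (fun h => (tendsto_div_last_snoc hb hy h).comp tendsto_snd) d

lemma LinearIndependent.irrational_div {ι : Type*} {Λ : ι → ℝ} (hΛ : LinearIndependent ℚ Λ)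
    {i j : ι} (hij : i ≠ j) : Irrational (Λ i / Λ j) := by
  rintro ⟨q, hq⟩
  apply hΛ.notMem_span_image (s := {j}) hij
  rw [Set.image_singleton, Submodule.mem_span_singleton]
  exact ⟨q, by rw [Rat.smul_def, hq, div_mul_cancel₀ _ (hΛ.ne_zero j)]⟩

lemma Filter.Tendsto.eventually_floor_eq {α : Type*} {l : Filter α} {f : α → ℝ} {r : ℝ}
    (hf : Tendsto f l (𝓝 r)) (hr : Irrational r) : ∀ᶠ z in l, ⌊f z⌋ = ⌊r⌋ := by
  have hlo : (⌊r⌋ : ℝ) < r := (Int.floor_le r).lt_of_ne (hr.ne_int ⌊r⌋).symm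
  filter_upwards [hf.eventually (Ioo_mem_nhds hlo (Int.lt_floor_add_one r))] with z hz
  exact Int.floor_eq_iff.mpr ⟨hz.1.le, hz.2⟩

lemma eventually_pos_mul_and_floor_div_eq {α ι : Type*} [Finite ι] {l : Filter α}
    {w s : α → ℝ} {t : ι → α → ℝ} {σ : ℝ} {τ : ι → ℝ} (hw : ∀ z, 0 < w z)
    (hs : Tendsto (fun z => s z / w z) l (𝓝 σ))
    (ht : ∀ i, Tendsto (fun z => t i z / w z) l (𝓝 (τ i)))
    (hσ : σ ≠ 0) (hτ : ∀ i, Irrational (τ i / σ)) :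
    ∀ᶠ z in l, 0 < σ * s z ∧ ∀ i, ⌊t i z / s z⌋ = ⌊τ i / σ⌋ := by
  have hsign := (hs.const_mul σ).eventually (lt_mem_nhds (mul_self_pos.mpr hσ))
  have hfloor := eventually_all.mpr fun i => ((ht i).div hs hσ).eventually_floor_eq (hτ i)
  filter_upwards [hsign, hfloor] with z hpos hfl
  refine ⟨?_, fun i => ?_⟩
  · rwa [mul_div_assoc', div_pos_iff_of_pos_right (hw z)] at hpos
  · rw [← hfl i, Pi.div_apply, div_div_div_cancel_right₀ (hw z).ne']

lemma exists_forall_sub_of_eventually_atTop_prod {P : ℕ × ℕ → Prop}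
    (h : ∀ᶠ z in atTop ×ˢ atTop, P z) (M : ℕ) :
    ∃ N, M ≤ N ∧ ∀ n₁ n₂, N ≤ n₁ → N ≤ n₂ →
      ∀ a b, a ≤ M → b ≤ M → P (n₁ - a, n₂ - b) := by
  rw [prod_atTop_atTop_eq, eventually_atTop] at h
  obtain ⟨⟨N₁, N₂⟩, hN⟩ := h
  refine ⟨max N₁ N₂ + M, le_add_self, fun n₁ n₂ h₁ h₂ a b ha hb => hN _ ⟨?_, ?_⟩⟩ <;> omega

theorem stmt_12_general (m : ℕ) (x y : Fin m → ℝ)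
    (A B : ℕ → Fin (m + 1) → ℤ)
    (hApos : ∀ n, 0 < A n (Fin.last m)) (hBpos : ∀ n, 0 < B n (Fin.last m))
    (hAlim : ∀ k : Fin m, Tendsto
      (fun n => (A n k.castSucc : ℝ) / (A n (Fin.last m) : ℝ)) atTop (nhds (x k)))
    (hBlim : ∀ k : Fin m, Tendsto
      (fun n => (B n k.castSucc : ℝ) / (B n (Fin.last m) : ℝ)) atTop (nhds (y k)))
    (X Y : Fin (m + 1) → ℝ) (hX : X = Fin.snoc x 1) (hY : Y = Fin.snoc y 1)
    (c : Fin (m + 1) → Fin (m + 1) → Fin (m + 1) → ℤ)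
    (Λ : Fin (m + 1) → ℝ)
    (hΛ : ∀ i, Λ i = ∑ k : Fin (m + 1), ∑ h : Fin (m + 1), (c i k h : ℝ) * X k * Y h)
    (hli : LinearIndependent ℚ Λ)
    (S : ℕ → ℕ → Fin (m + 1) → Fin (m + 1) → ℤ)
    (hS : ∀ n₁ n₂ : ℕ, ∀ j l : Fin (m + 1), S n₁ n₂ j l =
      ∑ k : Fin (m + 1), ∑ h : Fin (m + 1),
        c (Fin.last m) k h * A (n₁ - (j : ℕ)) k * B (n₂ - (l : ℕ)) h)
    (T : ℕ → ℕ → Fin m → Fin (m + 1) → Fin (m + 1) → ℤ)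
    (hT : ∀ n₁ n₂ : ℕ, ∀ i : Fin m, ∀ j l : Fin (m + 1), T n₁ n₂ i j l =
      ∑ k : Fin (m + 1), ∑ h : Fin (m + 1),
        c i.castSucc k h * A (n₁ - (j : ℕ)) k * B (n₂ - (l : ℕ)) h) :
    ∃ N : ℕ, m ≤ N ∧ ∀ n₁ n₂ : ℕ, N ≤ n₁ → N ≤ n₂ →
      (∀ j l, S n₁ n₂ j l ≠ 0) ∧
      ((∀ j l, 0 < S n₁ n₂ j l) ∨ (∀ j l, S n₁ n₂ j l < 0)) ∧
      (∀ i : Fin m, ∀ j l : Fin (m + 1),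
        ⌊(T n₁ n₂ i j l : ℝ) / (S n₁ n₂ j l : ℝ)⌋ = ⌊Λ i.castSucc / Λ (Fin.last m)⌋) := by
  have ha : ∀ n, (0 : ℝ) < A n (Fin.last m) := fun n => Int.cast_pos.mpr (hApos n)
  have hb : ∀ n, (0 : ℝ) < B n (Fin.last m) := fun n => Int.cast_pos.mpr (hBpos n)
  have hΛ' : ∀ i, Λ i = bilinSum (fun k h => (c i k h : ℝ)) (Fin.snoc x 1) (Fin.snoc y 1) := by
    subst hX hY; exact hΛ
  have hnorm (i) := hΛ' i ▸ tendsto_bilinSum_div_mul_last (a := fun n k => (A n k : ℝ))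
    (b := fun n h => (B n h : ℝ)) (fun n => (ha n).ne') (fun n => (hb n).ne') hAlim hBlim
    (fun k h => (c i k h : ℝ))
  have hev := eventually_pos_mul_and_floor_div_eq
    (w := fun z : ℕ × ℕ => (A z.1 (Fin.last m) : ℝ) * B z.2 (Fin.last m))
    (s := fun z => bilinSum (fun k h => (c (Fin.last m) k h : ℝ)) (fun k => (A z.1 k : ℝ))
      (fun h => (B z.2 h : ℝ)))
    (t := fun (i : Fin m) z => bilinSum (fun k h => (c i.castSucc k h : ℝ)) (fun k => (A z.1 k : ℝ))
      (fun h => (B z.2 h : ℝ)))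
    (fun z => mul_pos (ha z.1) (hb z.2))
    (hnorm (Fin.last m)) (fun i => hnorm i.castSucc) (hli.ne_zero _)
    (fun i => hli.irrational_div (Fin.castSucc_lt_last i).ne)
  obtain ⟨N, hmN, hN⟩ := exists_forall_sub_of_eventually_atTop_prod hev m
  refine ⟨N, hmN, fun n₁ n₂ h₁ h₂ => ?_⟩
  have hsign_floor : ∀ j l : Fin (m + 1), 0 < Λ (Fin.last m) * S n₁ n₂ j l ∧ ∀ i : Fin m,
      ⌊(T n₁ n₂ i j l : ℝ) / S n₁ n₂ j l⌋ = ⌊Λ i.castSucc / Λ (Fin.last m)⌋ := by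
    intro j l
    simpa [hS, hT, bilinSum] using hN n₁ n₂ h₁ h₂ j l j.is_le l.is_le
  refine ⟨fun j l hS0 => by simpa [hS0] using (hsign_floor j l).1, ?_, fun i j l => (hsign_floor j l).2 i⟩
  rcases (hli.ne_zero (Fin.last m)).lt_or_gt with hneg | hpos
  · exact Or.inr fun j l => by exact_mod_cast neg_of_mul_pos_right (hsign_floor j l).1 hneg.le
  · exact Or.inl fun j l => by exact_mod_cast pos_of_mul_pos_right (hsign_floor j l).1 hpos.le

/-- feasibility of the multidimensional Gosper algorithm, bilinear case.
With two families of convergents `A n k`, `B n k` (positive denominators) converging to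
`x k` and `y k`, `X = (x, 1)`, `Y = (y, 1)`, integer coefficients `c i k h` defining the
bilinear values `Λ i = ∑ c i k h * X k * Y h` with `(Λ 0, …, Λ m)` linearly independent over
`ℚ`, the quantities `S n₁ n₂ j l = ∑ c (last) k h * A (n₁ - j) k * B (n₂ - l) h` and
`T n₁ n₂ i j l = ∑ c i k h * A (n₁ - j) k * B (n₂ - l) h` satisfy: for all sufficiently large
`n₁, n₂`, the `S n₁ n₂ j l` are all nonzero of the same sign, and for each `i` the floors
`⌊T / S⌋` agree for all `j, l`, with common value `⌊Λ i / Λ (last)⌋`. -/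
theorem stmt_12 (m : ℕ) (hm : 1 ≤ m) (x y : Fin m → ℝ)
    (A B : ℕ → Fin (m + 1) → ℤ)
    (hApos : ∀ n, 0 < A n (Fin.last m)) (hBpos : ∀ n, 0 < B n (Fin.last m))
    (hAlim : ∀ k : Fin m, Tendsto
      (fun n => (A n k.castSucc : ℝ) / (A n (Fin.last m) : ℝ)) atTop (nhds (x k)))
    (hBlim : ∀ k : Fin m, Tendsto
      (fun n => (B n k.castSucc : ℝ) / (B n (Fin.last m) : ℝ)) atTop (nhds (y k)))
    (X Y : Fin (m + 1) → ℝ) (hX : X = Fin.snoc x 1) (hY : Y = Fin.snoc y 1)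
    (c : Fin (m + 1) → Fin (m + 1) → Fin (m + 1) → ℤ)
    (Λ : Fin (m + 1) → ℝ)
    (hΛ : ∀ i, Λ i = ∑ k : Fin (m + 1), ∑ h : Fin (m + 1), (c i k h : ℝ) * X k * Y h)
    (hli : LinearIndependent ℚ Λ)
    (S : ℕ → ℕ → Fin (m + 1) → Fin (m + 1) → ℤ)
    (hS : ∀ n₁ n₂ : ℕ, ∀ j l : Fin (m + 1), S n₁ n₂ j l =
      ∑ k : Fin (m + 1), ∑ h : Fin (m + 1),
        c (Fin.last m) k h * A (n₁ - (j : ℕ)) k * B (n₂ - (l : ℕ)) h)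
    (T : ℕ → ℕ → Fin m → Fin (m + 1) → Fin (m + 1) → ℤ)
    (hT : ∀ n₁ n₂ : ℕ, ∀ i : Fin m, ∀ j l : Fin (m + 1), T n₁ n₂ i j l =
      ∑ k : Fin (m + 1), ∑ h : Fin (m + 1),
        c i.castSucc k h * A (n₁ - (j : ℕ)) k * B (n₂ - (l : ℕ)) h) :
    ∃ N : ℕ, m ≤ N ∧ ∀ n₁ n₂ : ℕ, N ≤ n₁ → N ≤ n₂ →
      (∀ j l, S n₁ n₂ j l ≠ 0) ∧
      ((∀ j l, 0 < S n₁ n₂ j l) ∨ (∀ j l, S n₁ n₂ j l < 0)) ∧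
      (∀ i : Fin m, ∀ j l : Fin (m + 1),
        ⌊(T n₁ n₂ i j l : ℝ) / (S n₁ n₂ j l : ℝ)⌋ = ⌊Λ i.castSucc / Λ (Fin.last m)⌋) :=
  stmt_12_general m x y A B hApos hBpos hAlim hBlim X Y hX hY c Λ hΛ hli S hS T hT
end
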